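/- arXiv:1202.4587 — 7 statements merged into one kernel-verified Lean document; each statement's English description precedes it below -/
import Mathlib

section
/- Let g > 0, t > 0 and real numbers x, y₁, y₂, z, r, c₁, c₂, χ, s, u be given with c₁ − r·s ≠ 0, y₁ − x·s ≠ 0 and x·c₁ − r·y₁ ≠ 0. Then μ(r, c₁, c₂, χ) = μ(x, y₁, y₂, z) if and only if (s − C)² + t² = D + C². In other words, in the (s,t) upper half-plane the pseudo-wall on which the two Bridgeland slopes agree is exactly the semicircle with centre (C, 0) and radius √(D + C²). -/
/-- The pseudo-wall on which the Bridgeland slopes of `w = (r, c₁, c₂, χ)` and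
`v = (x, y₁, y₂, z)` agree is exactly the semicircle with centre `(C, 0)` and
radius `√(D + C²)` in the `(s, t)` upper half-plane. -/
theorem pseudo_wall_is_semicircle
    (g d t x y₁ y₂ z r c₁ c₂ χ s u : ℝ)
    (hg : 0 < g) (hd : 0 ≤ d) (ht : 0 < t)
    (h1 : c₁ - r * s ≠ 0) (h2 : y₁ - x * s ≠ 0) (h3 : x * c₁ - r * y₁ ≠ 0) :
    (χ - s * c₁ * g + u * c₂ * d + (r / 2) * (s ^ 2 * g - u ^ 2 * d - t ^ 2 * g))
        / ((c₁ - r * s) * g * t)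
      = (z - s * y₁ * g + u * y₂ * d + (x / 2) * (s ^ 2 * g - u ^ 2 * d - t ^ 2 * g))
        / ((y₁ - x * s) * g * t)
    ↔ (s - (x * χ - r * z + u * d * (x * c₂ - r * y₂)) / (g * (x * c₁ - r * y₁))) ^ 2 + t ^ 2
      = (2 * z * c₁ - 2 * c₂ * u * d * y₁ - x * u ^ 2 * d * c₁ + 2 * y₂ * u * d * c₁
          - 2 * χ * y₁ + r * u ^ 2 * d * y₁) / (g * (x * c₁ - r * y₁))
        + ((x * χ - r * z + u * d * (x * c₂ - r * y₂)) / (g * (x * c₁ - r * y₁))) ^ 2 := by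
  have hg' : g ≠ 0 := ne_of_gt hg
  have ht' : t ≠ 0 := ne_of_gt ht
  have hgM : g * (x * c₁ - r * y₁) ≠ 0 := mul_ne_zero hg' h3
  set C := (x * χ - r * z + u * d * (x * c₂ - r * y₂)) / (g * (x * c₁ - r * y₁)) with hCdef
  set D := (2 * z * c₁ - 2 * c₂ * u * d * y₁ - x * u ^ 2 * d * c₁ + 2 * y₂ * u * d * c₁
          - 2 * χ * y₁ + r * u ^ 2 * d * y₁) / (g * (x * c₁ - r * y₁)) with hDdef
  have hC : C * (g * (x * c₁ - r * y₁)) = x * χ - r * z + u * d * (x * c₂ - r * y₂) :=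
    div_mul_cancel₀ _ hgM
  have hD : D * (g * (x * c₁ - r * y₁))
      = 2 * z * c₁ - 2 * c₂ * u * d * y₁ - x * u ^ 2 * d * c₁ + 2 * y₂ * u * d * c₁
          - 2 * χ * y₁ + r * u ^ 2 * d * y₁ :=
    div_mul_cancel₀ _ hgM
  have hK : g * t * (g * (x * c₁ - r * y₁)) ≠ 0 := mul_ne_zero (mul_ne_zero hg' ht') hgM
  rw [div_eq_div_iff (by simp [h1, hg', ht', mul_ne_zero]) (by simp [h2, hg', ht', mul_ne_zero])]
  constructor
  · intro h
    apply mul_left_cancel₀ hK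
    linear_combination 2 * h + (-(2 * s * g * t)) * hC + (-(g * t)) * hD
  · intro h
    linear_combination (g * t * (g * (x * c₁ - r * y₁)) / 2) * h + s * g * t * hC
      + (g * t / 2) * hD
end

section
/- Let g ≠ 0 and real numbers x, y₁, y₂, z, r, c₁, c₂, χ, u be given with x ≠ 0 and x·c₁ − r·y₁ ≠ 0. Then D + C² = (C − y₁/x)² − F. Consequently the radius R = √(D + C²) of the pseudo-wall of w for v satisfies R² = (C − y₁/x)² − F, so R depends on w only through the centre C. -/
/-- `D + C² = (C − y₁/x)² − F`, so the radius `R = √(D + C²)` of the pseudo-wall of `w`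
for `v` depends on `w` only through the centre `C`. -/
theorem radius_from_centre
    (g d x y₁ y₂ z r c₁ c₂ χ u : ℝ)
    (hg : g ≠ 0) (hx : x ≠ 0) (h3 : x * c₁ - r * y₁ ≠ 0) :
    (2 * z * c₁ - 2 * c₂ * u * d * y₁ - x * u ^ 2 * d * c₁ + 2 * y₂ * u * d * c₁
        - 2 * χ * y₁ + r * u ^ 2 * d * y₁) / (g * (x * c₁ - r * y₁))
      + ((x * χ - r * z + u * d * (x * c₂ - r * y₂)) / (g * (x * c₁ - r * y₁))) ^ 2
    = ((x * χ - r * z + u * d * (x * c₂ - r * y₂)) / (g * (x * c₁ - r * y₁)) - y₁ / x) ^ 2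
      - ((d / g) * (u - y₂ / x) ^ 2 + (y₁ ^ 2 * g - y₂ ^ 2 * d - 2 * x * z) / (x ^ 2 * g)) := by
  have h3' : c₁ * x - y₁ * r ≠ 0 := by rwa [mul_comm y₁ r, mul_comm c₁ x]
  field_simp [h3']
  ring
end

section
/- Fix real numbers a and F ≥ 0 and let C₁ < C₂ < a − √F. Then C₁ − R(C₁) < C₂ − R(C₂) and C₁ + R(C₁) ≥ C₂ + R(C₂), and the second inequality is strict when F > 0 (when F = 0 one has C + R(C) = a for all C < a). That is, C ↦ C − R(C) is strictly increasing and C ↦ C + R(C) is antitone on (−∞, a − √F). -/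
/-- `C ↦ C − R(C)` is strictly increasing and `C ↦ C + R(C)` is antitone on
`(−∞, a − √F)`, where `R(C) = √((a − C)² − F)`; when `F > 0` the antitonicity is
strict, and when `F = 0` one has `C + R(C) = a` for all `C < a`. -/
theorem wall_monotonicity
    (a F C₁ C₂ : ℝ) (hF : 0 ≤ F)
    (h12 : C₁ < C₂) (h2 : C₂ < a - Real.sqrt F) :
    C₁ - Real.sqrt ((a - C₁) ^ 2 - F) < C₂ - Real.sqrt ((a - C₂) ^ 2 - F)
    ∧ C₂ + Real.sqrt ((a - C₂) ^ 2 - F) ≤ C₁ + Real.sqrt ((a - C₁) ^ 2 - F)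
    ∧ (0 < F → C₂ + Real.sqrt ((a - C₂) ^ 2 - F) < C₁ + Real.sqrt ((a - C₁) ^ 2 - F))
    ∧ (F = 0 → ∀ C : ℝ, C < a → C + Real.sqrt ((a - C) ^ 2 - F) = a) := by
  have hsF : 0 ≤ Real.sqrt F := Real.sqrt_nonneg F
  have hsF2 : Real.sqrt F ^ 2 = F := Real.sq_sqrt hF
  have hu2 : Real.sqrt F < a - C₂ := by linarith
  have hu1 : Real.sqrt F < a - C₁ := by linarith
  have h2pos : 0 < (a - C₂) ^ 2 - F := by nlinarith
  have h1pos : 0 < (a - C₁) ^ 2 - F := by nlinarith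
  set s₁ := Real.sqrt ((a - C₁) ^ 2 - F) with hs₁
  set s₂ := Real.sqrt ((a - C₂) ^ 2 - F) with hs₂
  have hs1sq : s₁ ^ 2 = (a - C₁) ^ 2 - F := Real.sq_sqrt h1pos.le
  have hs2sq : s₂ ^ 2 = (a - C₂) ^ 2 - F := Real.sq_sqrt h2pos.le
  have hs1pos : 0 < s₁ := Real.sqrt_pos.mpr h1pos
  have hs2pos : 0 < s₂ := Real.sqrt_pos.mpr h2pos
  have hle1 : s₁ ≤ a - C₁ := by nlinarith
  have hle2 : s₂ ≤ a - C₂ := by nlinarith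
  refine ⟨by nlinarith, by nlinarith, fun hFpos => ?_, fun hF0 C hC => ?_⟩
  · have : s₂ < a - C₂ := by nlinarith
    nlinarith
  · rw [hF0, sub_zero, Real.sqrt_sq (by linarith : 0 ≤ a - C)]
    ring
end

section
/- (Nested Wall property.) Fix real numbers a and F ≥ 0 and let C₁ < C₂ < a − √F. Then every point of the upper semicircle with centre C₂ lies strictly inside the circle with centre C₁: for all real s and t > 0 with (s − C₂)² + t² = R(C₂)², one has (s − C₁)² + t² < R(C₁)². -/
/-- Nested Wall property: every point of the upper semicircle with centre `C₂` lies
strictly inside the circle with centre `C₁`, where the radius of the pseudo-wall with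
centre `C` is `R(C) = √((a − C)² − F)`. -/
theorem nested_walls
    (a F C₁ C₂ : ℝ) (hF : 0 ≤ F)
    (h12 : C₁ < C₂) (h2 : C₂ < a - Real.sqrt F) :
    ∀ s t : ℝ, 0 < t →
      (s - C₂) ^ 2 + t ^ 2 = Real.sqrt ((a - C₂) ^ 2 - F) ^ 2 →
      (s - C₁) ^ 2 + t ^ 2 < Real.sqrt ((a - C₁) ^ 2 - F) ^ 2 := by
  intro s t ht heq
  have hsF : Real.sqrt F ^ 2 = F := Real.sq_sqrt hF
  have hs0 : 0 ≤ Real.sqrt F := Real.sqrt_nonneg F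
  have h2' : Real.sqrt F < a - C₂ := by linarith
  have h1' : Real.sqrt F < a - C₁ := by linarith
  have hA2 : 0 ≤ (a - C₂) ^ 2 - F := by nlinarith
  have hA1 : 0 ≤ (a - C₁) ^ 2 - F := by nlinarith
  rw [Real.sq_sqrt hA2] at heq
  rw [Real.sq_sqrt hA1]
  have hsa : s < a := by nlinarith [sq_nonneg t, sq_nonneg (s - C₂)]
  nlinarith
end

section
/- Fix real numbers a and F ≥ 0 and let C₁, C₂ < a − √F with C₁ ≠ C₂. Then the corresponding pseudo-walls are disjoint in the upper half-plane: there is no pair (s, t) with t > 0 satisfying both (s − C₁)² + t² = R(C₁)² and (s − C₂)² + t² = R(C₂)². -/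
/-- Distinct pseudo-walls are disjoint in the upper half-plane. -/
theorem walls_disjoint
    (a F C₁ C₂ : ℝ) (hF : 0 ≤ F)
    (h1 : C₁ < a - Real.sqrt F) (h2 : C₂ < a - Real.sqrt F) (hne : C₁ ≠ C₂) :
    ¬ ∃ s t : ℝ, 0 < t
        ∧ (s - C₁) ^ 2 + t ^ 2 = Real.sqrt ((a - C₁) ^ 2 - F) ^ 2
        ∧ (s - C₂) ^ 2 + t ^ 2 = Real.sqrt ((a - C₂) ^ 2 - F) ^ 2 := by
  rintro ⟨s, t, ht, e1, e2⟩
  have hs : 0 ≤ Real.sqrt F := Real.sqrt_nonneg F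
  have hsq : Real.sqrt F ^ 2 = F := Real.sq_sqrt hF
  have g1 : 0 ≤ (a - C₁) ^ 2 - F := by nlinarith
  have g2 : 0 ≤ (a - C₂) ^ 2 - F := by nlinarith
  rw [Real.sq_sqrt g1] at e1
  rw [Real.sq_sqrt g2] at e2
  have hsa : s = a := by
    rcases lt_or_gt_of_ne hne with h | h <;> nlinarith
  subst hsa
  nlinarith
end

section
/- Fix real numbers a and F ≥ 0. Then every point of the region {(s, t) : s < a, t > 0} lies on a unique pseudo-wall: for all real s < a and t > 0 there exists a unique C < a − √F such that (s − C)² + t² = (a − C)² − F. -/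
/-- Every point of the region `{(s, t) : s < a, t > 0}` lies on a unique pseudo-wall. -/
theorem unique_wall_through_point
    (a F : ℝ) (hF : 0 ≤ F) :
    ∀ s t : ℝ, s < a → 0 < t →
      ∃! C : ℝ, C < a - Real.sqrt F ∧ (s - C) ^ 2 + t ^ 2 = (a - C) ^ 2 - F := by
  intro s t hs ht
  have has : 0 < a - s := by linarith
  set C := (a ^ 2 - s ^ 2 - t ^ 2 - F) / (2 * (a - s)) with hC
  have heq : (s - C) ^ 2 + t ^ 2 = (a - C) ^ 2 - F := by
    rw [hC]
    field_simp [hC]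
    ring
  have hsq : Real.sqrt F ^ 2 = F := Real.sq_sqrt hF
  have hpos : 0 < a - C := by
    rw [hC]
    rw [sub_div']
    · apply div_pos _ (by linarith)
      nlinarith [sq_nonneg (a - s)]
    · positivity
  have hlt : C < a - Real.sqrt F := by
    have h2 : Real.sqrt F < a - C := by
      nlinarith [Real.sqrt_nonneg F, sq_nonneg (s - C)]
    linarith
  refine ⟨C, ⟨hlt, heq⟩, ?_⟩
  rintro C' ⟨hC', heq'⟩
  have : 2 * C' * (a - s) = a ^ 2 - s ^ 2 - t ^ 2 - F := by nlinarith [heq']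
  rw [hC]
  field_simp
  linarith [this]
end

section
/- Let p, x, t̃, g′, n be positive real numbers with 2t̃p − 1 > 0, set g = g′·t̃, and let r, c₁, m, y₁ be real numbers satisfying g′·n·y₁ − m·x = p, c₁·g′·n − m·r < p, and c₁ − r·(m/(g′n) + (2t̃p − 1)/(2gnx)) > 0. Then r < (2t̃p/(2t̃p − 1))·x. (This is the numerical heart of the proof that, when p > 1 and ξ = 2t̃p/(2t̃p − 1), any destabilizing subobject or quotient existing at both s = m/(g′n) and s = m/(g′n) + (2t̃p − 1)/(2gnx) has rank less than ξ·x.) -/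
/-- The numerical heart of the high-rank bound when `p > 1`: a destabilizing class
surviving at both `s = m/(g′n)` and `s = m/(g′n) + (2t̃p − 1)/(2gnx)` has rank
`r < (2t̃p/(2t̃p − 1))·x`. -/
theorem high_rank_bound
    (p x tg g' n g r c₁ m y₁ : ℝ)
    (hp : 0 < p) (hx : 0 < x) (htg : 0 < tg) (hg' : 0 < g') (hn : 0 < n)
    (hxi : 0 < 2 * tg * p - 1)
    (hg : g = g' * tg)
    (h1 : g' * n * y₁ - m * x = p)
    (h2 : c₁ * g' * n - m * r < p)
    (h3 : 0 < c₁ - r * (m / (g' * n) + (2 * tg * p - 1) / (2 * g * n * x))) :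
    r < (2 * tg * p / (2 * tg * p - 1)) * x := by
  subst hg
  have hA : 0 < g' * n := mul_pos hg' hn
  have hB : 0 < 2 * (g' * tg) * n * x := by positivity
  have h3' : r * (m / (g' * n) + (2 * tg * p - 1) / (2 * (g' * tg) * n * x)) < c₁ := by
    linarith
  rw [div_add_div _ _ (ne_of_gt hA) (ne_of_gt hB), ← mul_div_assoc, div_lt_iff₀ (by positivity)] at h3'
  rw [div_mul_eq_mul_div, lt_div_iff₀ hxi]
  nlinarith [mul_pos hA hB, mul_lt_mul_of_pos_right h2 (mul_pos htg hx)]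
end
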